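/- arXiv:1007.1445 — 2 statements merged into one kernel-verified Lean document; each statement's English description precedes it below -/
import Mathlib

section
/- If an entanglement monotone E on bipartite density matrices is not subadditive — i.e. there exist ρ₁, ρ₂ with E(ρ₁⊗ρ₂) > E(ρ₁)+E(ρ₂) — then there exists a CPTP map Λ whose unassisted entangling capacity equals E(ρ₁) but whose entanglement-assisted capacity sup_ρ [E(Λ(ρ)) − E(ρ)] is strictly greater than E(ρ₁); hence resource independence fails. -/
open scoped Matrix Kronecker BigOperators ComplexOrder

/-- A density matrix. -/
def IsDensity {n : Type*} [Fintype n] (ρ : Matrix n n ℂ) : Prop :=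
  ρ.PosSemidef ∧ ρ.trace = 1

/-- A separable (bipartite) density matrix. -/
def IsSeparableState {a b : Type*} [Fintype a] [Fintype b]
    (σ : Matrix (a × b) (a × b) ℂ) : Prop :=
  ∃ (m : ℕ) (p : Fin m → ℝ) (σA : Fin m → Matrix a a ℂ) (σB : Fin m → Matrix b b ℂ),
    (∀ i, 0 ≤ p i) ∧ (∑ i, p i) = 1 ∧
    (∀ i, IsDensity (σA i)) ∧ (∀ i, IsDensity (σB i)) ∧
    σ = ∑ i, ((p i : ℝ) : ℂ) • (σA i ⊗ₖ σB i)

/-- A CPTP map between (possibly different) matrix algebras, presented by Kraus operators. -/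
def IsCPTP {α β : Type*} [Fintype α] [Fintype β] [DecidableEq α]
    (Λ : Matrix α α ℂ → Matrix β β ℂ) : Prop :=
  ∃ (m : ℕ) (K : Fin m → Matrix β α ℂ),
    (∀ ρ, Λ ρ = ∑ i, K i * ρ * (K i)ᴴ) ∧ (∑ i, (K i)ᴴ * K i) = 1

/-- A separable CPTP map between bipartite systems: all Kraus operators are of
product form `Kᵢ ⊗ Lᵢ` (this class contains LOCC maps). -/
def IsSepCPTP {a b a' b' : Type*} [Fintype a] [Fintype b] [Fintype a'] [Fintype b']
    [DecidableEq a] [DecidableEq b]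
    (Λ : Matrix (a × b) (a × b) ℂ → Matrix (a' × b') (a' × b') ℂ) : Prop :=
  ∃ (m : ℕ) (K : Fin m → Matrix a' a ℂ) (L : Fin m → Matrix b' b ℂ),
    (∀ ρ, Λ ρ = ∑ i, (K i ⊗ₖ L i) * ρ * (K i ⊗ₖ L i)ᴴ) ∧
    (∑ i, (K i ⊗ₖ L i)ᴴ * (K i ⊗ₖ L i)) = 1

/-- Tensor product of bipartite states, regrouped along the `A|B` cut. -/
def tensorState {a b c d : Type*}
    (ρ : Matrix (a × b) (a × b) ℂ) (τ : Matrix (c × d) (c × d) ℂ) :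
    Matrix ((a × c) × (b × d)) ((a × c) × (b × d)) ℂ :=
  Matrix.reindex (Equiv.prodProdProdComm a b c d) (Equiv.prodProdProdComm a b c d) (ρ ⊗ₖ τ)

section SqrtCompat
open scoped MatrixOrder

noncomputable def Matrix.PosSemidef.sqrt {n : Type*} [Fintype n] [DecidableEq n]
    {A : Matrix n n ℂ} (_hA : A.PosSemidef) : Matrix n n ℂ := CFC.sqrt A

lemma Matrix.PosSemidef.posSemidef_sqrt {n : Type*} [Fintype n] [DecidableEq n]
    {A : Matrix n n ℂ} (hA : A.PosSemidef) : hA.sqrt.PosSemidef :=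
  Matrix.nonneg_iff_posSemidef.mp (CFC.sqrt_nonneg A)

lemma Matrix.PosSemidef.sqrt_mul_self {n : Type*} [Fintype n] [DecidableEq n]
    {A : Matrix n n ℂ} (hA : A.PosSemidef) : hA.sqrt * hA.sqrt = A :=
  CFC.sqrt_mul_sqrt_self A hA.nonneg

end SqrtCompat
section Aux
open Matrix

lemma posSemidef_sum {n ι : Type*} [Fintype n] [Fintype ι] (f : ι → Matrix n n ℂ)
    (h : ∀ i, (f i).PosSemidef) : (∑ i, f i).PosSemidef := by
  classical
  exact Finset.sum_induction f _ (fun a b ha hb => ha.add hb) Matrix.PosSemidef.zero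
    (fun i _ => h i)

lemma kraus_density {α β ι : Type*} [Fintype α] [Fintype β] [Fintype ι] [DecidableEq α]
    (K : ι → Matrix β α ℂ) (hTP : ∑ i, (K i)ᴴ * K i = 1)
    {ρ : Matrix α α ℂ} (hρ : IsDensity ρ) :
    IsDensity (∑ i, K i * ρ * (K i)ᴴ) := by
  constructor
  · exact posSemidef_sum _ fun i => hρ.1.mul_mul_conjTranspose_same (K i)
  · rw [Matrix.trace_sum]
    have : ∀ i : ι, (K i * ρ * (K i)ᴴ).trace = ((K i)ᴴ * (K i) * ρ).trace := by
      intro i; rw [Matrix.trace_mul_cycle]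
    rw [Finset.sum_congr rfl fun i _ => this i, ← Matrix.trace_sum, ← Finset.sum_mul, hTP,
      one_mul, hρ.2]

lemma sqrt_outer {n : Type*} [Fintype n] [DecidableEq n] {A : Matrix n n ℂ}
    (hA : A.PosSemidef) (x y : n) :
    ∑ k, hA.sqrt x k * star (hA.sqrt y k) = A x y := by
  have h1 : hA.sqrt * (hA.sqrt)ᴴ = A := by
    rw [hA.posSemidef_sqrt.isHermitian.eq, hA.sqrt_mul_self]
  calc ∑ k, hA.sqrt x k * star (hA.sqrt y k)
      = (hA.sqrt * (hA.sqrt)ᴴ) x y := by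
        simp [Matrix.mul_apply, Matrix.conjTranspose_apply]
    _ = A x y := by rw [h1]

lemma pure_density {n : Type*} [Fintype n] [DecidableEq n] (e : n) :
    IsDensity (Matrix.of fun u v => if u = e ∧ v = e then (1:ℂ) else 0) := by
  refine ⟨Matrix.PosSemidef.of_dotProduct_mulVec_nonneg ?_ ?_, ?_⟩
  · ext u v
    simp only [Matrix.conjTranspose_apply, Matrix.of_apply, and_comm]
    simp [apply_ite]
  · intro x
    have : (star x) ⬝ᵥ ((Matrix.of fun u v => if u = e ∧ v = e then (1:ℂ) else 0) *ᵥ x)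
        = star (x e) * x e := by
      simp [Matrix.mulVec, dotProduct, ite_and, Finset.sum_ite_eq, mul_ite, ite_mul,
        Finset.mul_sum]
    rw [this]; exact star_mul_self_nonneg _
  · simp [Matrix.trace, Matrix.diag, Finset.sum_ite_eq]

end Aux
section Aux2
open Matrix

/-- projection Kraus operator extracting block `i` of the first factor -/
noncomputable def proj {q r : Type*} [DecidableEq q] [DecidableEq r] (i : q) :
    Matrix r (q × r) ℂ :=
  Matrix.of fun x p => if p = (i, x) then (1 : ℂ) else 0

/-- partial trace over the first factor -/
noncomputable def ptr {q r : Type*} [Fintype q] (M : Matrix (q × r) (q × r) ℂ) :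
    Matrix r r ℂ :=
  Matrix.of fun x y => ∑ i, M (i, x) (i, y)

lemma ptr_eq_sum_conj {q r : Type*} [Fintype q] [Fintype r] [DecidableEq q] [DecidableEq r]
    (M : Matrix (q × r) (q × r) ℂ) :
    ptr M = ∑ i : q, proj (r := r) i * M * (proj (r := r) i)ᴴ := by
  ext x y
  simp [ptr, proj, Matrix.sum_apply, Matrix.mul_apply, Matrix.conjTranspose_apply,
    ite_mul, mul_ite, apply_ite, Finset.sum_ite_eq, Finset.sum_ite_eq']

lemma ptr_density {q r : Type*} [Fintype q] [Fintype r] [DecidableEq q] [DecidableEq r]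
    {M : Matrix (q × r) (q × r) ℂ}
    (hM : IsDensity M) : IsDensity (ptr M) := by
  constructor
  · rw [ptr_eq_sum_conj]
    exact posSemidef_sum _ fun i => hM.1.mul_mul_conjTranspose_same (proj i)
  · rw [← hM.2]
    simp only [Matrix.trace, Matrix.diag, ptr, Matrix.of_apply, Fintype.sum_prod_type]
    exact Finset.sum_comm

/-- discard the two qubits -/
noncomputable def dMap {c d : Type*} [Fintype c] [Fintype d]
    (ρ : Matrix ((Fin 2 × c) × (Fin 2 × d)) ((Fin 2 × c) × (Fin 2 × d)) ℂ) :
    Matrix (c × d) (c × d) ℂ :=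
  Matrix.of fun p q => ∑ i : Fin 2, ∑ j : Fin 2, ρ ((i, p.1), (j, p.2)) ((i, q.1), (j, q.2))

lemma tensorState_apply {a b c d : Type*}
    (ρ : Matrix (a × b) (a × b) ℂ) (τ : Matrix (c × d) (c × d) ℂ)
    (r s : (a × c) × (b × d)) :
    tensorState ρ τ r s = ρ (r.1.1, r.2.1) (s.1.1, s.2.1) * τ (r.1.2, r.2.2) (s.1.2, s.2.2) :=
  rfl

noncomputable def sepChan {a b a' b' ι : Type*} [Fintype a] [Fintype b] [Fintype ι]
    (K : ι → Matrix a' a ℂ) (L : ι → Matrix b' b ℂ)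
    (ρ : Matrix (a × b) (a × b) ℂ) : Matrix (a' × b') (a' × b') ℂ :=
  ∑ i, (K i ⊗ₖ L i) * ρ * (K i ⊗ₖ L i)ᴴ

lemma sepChan_isSepCPTP {a b a' b' ι : Type*} [Fintype a] [Fintype b] [Fintype a'] [Fintype b']
    [Fintype ι] [DecidableEq a] [DecidableEq b]
    (K : ι → Matrix a' a ℂ) (L : ι → Matrix b' b ℂ)
    (hTP : ∑ i, (K i ⊗ₖ L i)ᴴ * (K i ⊗ₖ L i) = 1) : IsSepCPTP (sepChan K L) := by
  classical
  refine ⟨Fintype.card ι, fun j => K ((Fintype.equivFin ι).symm j),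
    fun j => L ((Fintype.equivFin ι).symm j), fun ρ => ?_, ?_⟩
  · exact (Equiv.sum_comp (Fintype.equivFin ι).symm
      (fun i => (K i ⊗ₖ L i) * ρ * (K i ⊗ₖ L i)ᴴ)).symm
  · rw [Equiv.sum_comp (Fintype.equivFin ι).symm
      (fun i => (K i ⊗ₖ L i)ᴴ * (K i ⊗ₖ L i))]
    exact hTP

lemma sepChan_density {a b a' b' ι : Type*} [Fintype a] [Fintype b] [Fintype a'] [Fintype b']
    [Fintype ι] [DecidableEq a] [DecidableEq b]
    (K : ι → Matrix a' a ℂ) (L : ι → Matrix b' b ℂ)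
    (hTP : ∑ i, (K i ⊗ₖ L i)ᴴ * (K i ⊗ₖ L i) = 1)
    {ρ : Matrix (a × b) (a × b) ℂ} (hρ : IsDensity ρ) : IsDensity (sepChan K L ρ) :=
  kraus_density (fun i => K i ⊗ₖ L i) hTP hρ

end Aux2
section Aux3
open Matrix

variable {A₁ B₁ A₂ B₂ : Type*} [Fintype A₁] [Fintype B₁] [Fintype A₂] [Fintype B₂]
  [DecidableEq A₁] [DecidableEq B₁] [DecidableEq A₂] [DecidableEq B₂]

/-- Kraus operators of the map `ρ ↦ ρ₁ ⊗ (dMap ρ)`: measure the two qubits,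
then prepare `ρ₁` (via its square root `S`). -/
noncomputable def lamK (S : Matrix (A₁ × B₁) (A₁ × B₁) ℂ)
    (t : (A₁ × B₁) × Fin 2 × Fin 2) :
    Matrix ((A₁ × A₂) × (B₁ × B₂)) ((Fin 2 × A₂) × (Fin 2 × B₂)) ℂ :=
  Matrix.of fun r u =>
    if u = ((t.2.1, r.1.2), (t.2.2, r.2.2)) then S (r.1.1, r.2.1) t.1 else 0

lemma sqrt_norm_sum {n : Type*} [Fintype n] [DecidableEq n] {A : Matrix n n ℂ}
    (hA : A.PosSemidef) (htr : A.trace = 1) :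
    ∑ k : n, ∑ m : n, star (hA.sqrt m k) * hA.sqrt m k = 1 := by
  have h1 : ∀ k, ∑ m : n, star (hA.sqrt m k) * hA.sqrt m k = ((hA.sqrt)ᴴ * hA.sqrt) k k := by
    intro k
    rw [Matrix.mul_apply]
    exact Finset.sum_congr rfl fun m _ => by rw [Matrix.conjTranspose_apply]
  rw [Finset.sum_congr rfl fun k _ => h1 k]
  have h2 : ((hA.sqrt)ᴴ * hA.sqrt).trace = 1 := by
    rw [hA.posSemidef_sqrt.isHermitian.eq, hA.sqrt_mul_self, htr]
  exact h2

lemma lamK_value {ρ₁ : Matrix (A₁ × B₁) (A₁ × B₁) ℂ} (h₁ : ρ₁.PosSemidef)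
    (ρ : Matrix ((Fin 2 × A₂) × (Fin 2 × B₂)) ((Fin 2 × A₂) × (Fin 2 × B₂)) ℂ) :
    tensorState ρ₁ (dMap ρ) = ∑ t, lamK (A₂ := A₂) (B₂ := B₂) (h₁.sqrt) t * ρ * (lamK (A₂ := A₂) (B₂ := B₂) (h₁.sqrt) t)ᴴ := by
  ext r s
  obtain ⟨⟨a1, a2⟩, b1, b2⟩ := r
  obtain ⟨⟨a1', a2'⟩, b1', b2'⟩ := s
  rw [tensorState_apply, ← sqrt_outer h₁ (a1, b1) (a1', b1')]
  have hd : dMap ρ (a2, b2) (a2', b2')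
      = ∑ p : Fin 2 × Fin 2, ρ ((p.1, a2), (p.2, b2)) ((p.1, a2'), (p.2, b2')) := by
    rw [Fintype.sum_prod_type]; rfl
  rw [hd, Finset.sum_mul_sum, Matrix.sum_apply]
  conv_rhs => rw [Fintype.sum_prod_type]
  refine Finset.sum_congr rfl fun k _ => Finset.sum_congr rfl fun p _ => ?_
  obtain ⟨i, j⟩ := p
  simp only [Matrix.mul_apply, Matrix.conjTranspose_apply, lamK, Matrix.of_apply,
    ite_mul, zero_mul, mul_ite, mul_zero, apply_ite (star : ℂ → ℂ), star_zero,
    Finset.sum_ite_eq', Finset.mem_univ, if_true]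
  ring

lemma lamK_tp {ρ₁ : Matrix (A₁ × B₁) (A₁ × B₁) ℂ} (h₁ : ρ₁.PosSemidef)
    (htr : ρ₁.trace = 1) :
    ∑ t, (lamK (A₂ := A₂) (B₂ := B₂) (h₁.sqrt) t)ᴴ * lamK (A₂ := A₂) (B₂ := B₂) (h₁.sqrt) t = 1 := by
  ext u v
  obtain ⟨⟨i1, x⟩, j1, y⟩ := u
  obtain ⟨⟨i1', x'⟩, j1', y'⟩ := v
  have hs := sqrt_norm_sum h₁ htr
  simp only [Matrix.sum_apply, Matrix.mul_apply, Matrix.conjTranspose_apply, lamK,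
    Matrix.of_apply, apply_ite (star : ℂ → ℂ), star_zero, ite_mul, mul_ite, zero_mul,
    mul_zero, Fintype.sum_prod_type, Prod.mk.injEq, ite_and, Finset.sum_ite_eq,
    Finset.sum_ite_eq', Finset.mem_univ, if_true, Matrix.one_apply,
    Finset.sum_ite_irrel, Finset.sum_const_zero]
  split_ifs with hh1 hh2 hh3 hh4 <;> try rfl
  simpa only [Fintype.sum_prod_type] using hs

end Aux3
section Aux4
open Matrix

variable {A₁ B₁ A₂ B₂ : Type*} [Fintype A₁] [Fintype B₁] [Fintype A₂] [Fintype B₂]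
  [DecidableEq A₁] [DecidableEq B₁] [DecidableEq A₂] [DecidableEq B₂]

/-- Kraus (A side) for appending a separable state. -/
noncomputable def appK (p : Fin m → ℝ) (SA : Fin m → Matrix A₂ A₂ ℂ)
    (t : Fin m × A₂ × B₂) : Matrix (A₁ × A₂) A₁ ℂ :=
  Matrix.of fun r a => if r.1 = a then (Real.sqrt (p t.1) : ℂ) * SA t.1 r.2 t.2.1 else 0

/-- Kraus (B side) for appending a separable state. -/
noncomputable def appL (SB : Fin m → Matrix B₂ B₂ ℂ)
    (t : Fin m × A₂ × B₂) : Matrix (B₁ × B₂) B₁ ℂ :=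
  Matrix.of fun r b => if r.1 = b then SB t.1 r.2 t.2.2 else 0

lemma app_value {m : ℕ} (p : Fin m → ℝ) (hp : ∀ i, 0 ≤ p i)
    (τA : Fin m → Matrix A₂ A₂ ℂ) (τB : Fin m → Matrix B₂ B₂ ℂ)
    (hA : ∀ i, (τA i).PosSemidef) (hB : ∀ i, (τB i).PosSemidef)
    (ρ : Matrix (A₁ × B₁) (A₁ × B₁) ℂ) :
    sepChan (appK (A₁ := A₁) p (fun i => (hA i).sqrt))
        (appL (B₁ := B₁) (fun i => (hB i).sqrt)) ρ
      = tensorState ρ (∑ i, ((p i : ℝ) : ℂ) • (τA i ⊗ₖ τB i)) := by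
  ext r s
  obtain ⟨⟨a1, a2⟩, b1, b2⟩ := r
  obtain ⟨⟨a1', a2'⟩, b1', b2'⟩ := s
  rw [tensorState_apply]
  simp only [Matrix.sum_apply, Matrix.smul_apply, Matrix.kroneckerMap_apply, smul_eq_mul]
  have hrhs : ∀ i, ((p i : ℝ) : ℂ) * (τA i a2 a2' * τB i b2 b2')
      = ((p i : ℝ) : ℂ) * ((∑ k, (hA i).sqrt a2 k * star ((hA i).sqrt a2' k))
          * (∑ l, (hB i).sqrt b2 l * star ((hB i).sqrt b2' l))) := by
    intro i; rw [sqrt_outer (hA i), sqrt_outer (hB i)]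
  rw [Finset.sum_congr rfl fun i _ => hrhs i]
  simp only [sepChan, Matrix.sum_apply, Matrix.mul_apply, Matrix.conjTranspose_apply,
    Matrix.kroneckerMap_apply, appK, appL, Matrix.of_apply, ite_mul, mul_ite, zero_mul,
    mul_zero, apply_ite (star : ℂ → ℂ), star_zero, Fintype.sum_prod_type,
    Finset.sum_ite_irrel, Finset.sum_const_zero, Finset.sum_ite_eq, Finset.sum_ite_eq',
    Finset.mem_univ, if_true, star_mul', Complex.star_def, Complex.conj_ofReal,
    Finset.mul_sum, Finset.sum_mul]
  refine Finset.sum_congr rfl fun i _ => ?_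
  rw [Finset.sum_comm]
  refine Finset.sum_congr rfl fun k _ => Finset.sum_congr rfl fun l _ => ?_
  have hps : (Real.sqrt (p i) : ℂ) * (Real.sqrt (p i) : ℂ) = ((p i : ℝ) : ℂ) := by
    rw [← Complex.ofReal_mul, Real.mul_self_sqrt (hp i)]
  rw [← hps]
  ring

lemma app_tp {m : ℕ} (p : Fin m → ℝ) (hp : ∀ i, 0 ≤ p i) (hp1 : ∑ i, p i = 1)
    (τA : Fin m → Matrix A₂ A₂ ℂ) (τB : Fin m → Matrix B₂ B₂ ℂ)
    (hA : ∀ i, (τA i).PosSemidef) (hB : ∀ i, (τB i).PosSemidef)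
    (htA : ∀ i, (τA i).trace = 1) (htB : ∀ i, (τB i).trace = 1) :
    ∑ t, ((appK (A₁ := A₁) p (fun i => (hA i).sqrt) t ⊗ₖ appL (B₁ := B₁) (fun i => (hB i).sqrt) t)ᴴ
        * (appK (A₁ := A₁) p (fun i => (hA i).sqrt) t ⊗ₖ appL (B₁ := B₁) (fun i => (hB i).sqrt) t)) = 1 := by
  ext u v
  obtain ⟨ua, ub⟩ := u
  obtain ⟨va, vb⟩ := v
  simp only [Matrix.sum_apply, Matrix.mul_apply, Matrix.conjTranspose_apply,
    Matrix.kroneckerMap_apply, appK, appL, Matrix.of_apply, ite_mul, mul_ite, zero_mul,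
    mul_zero, apply_ite (star : ℂ → ℂ), star_zero, Fintype.sum_prod_type,
    Finset.sum_ite_irrel, Finset.sum_const_zero, Finset.sum_ite_eq, Finset.sum_ite_eq',
    Finset.mem_univ, if_true, star_mul', Complex.star_def, Complex.conj_ofReal,
    Matrix.one_apply, Prod.mk.injEq, ite_and]
  have hps : ∀ i, (Real.sqrt (p i) : ℂ) * (Real.sqrt (p i) : ℂ) = ((p i : ℝ) : ℂ) := by
    intro i; rw [← Complex.ofReal_mul, Real.mul_self_sqrt (hp i)]
  by_cases h1 : ua = va
  case neg =>
    have h1' : ¬ va = ua := fun h => h1 h.symm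
    simp [h1, h1']
  case pos =>
  by_cases h2 : ub = vb
  case neg =>
    have h2' : ¬ vb = ub := fun h => h2 h.symm
    simp [h2, h2']
  case pos =>
    subst h1; subst h2
    simp only [eq_self_iff_true, if_true]
    trans (∑ i : Fin m, ((p i : ℝ) : ℂ))
    · refine Finset.sum_congr rfl fun i _ => ?_
      have hA1 := sqrt_norm_sum (hA i) (htA i)
      have hB1 := sqrt_norm_sum (hB i) (htB i)
      calc (∑ k : A₂, ∑ l : B₂, ∑ x3 : A₂, ∑ x4 : B₂,
            (Real.sqrt (p i) : ℂ) * star ((hA i).sqrt x3 k) * star ((hB i).sqrt x4 l) *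
              ((Real.sqrt (p i) : ℂ) * (hA i).sqrt x3 k * (hB i).sqrt x4 l))
          = ∑ k : A₂, ∑ l : B₂,
              ((∑ x3 : A₂, star ((hA i).sqrt x3 k) * (hA i).sqrt x3 k)
                * (∑ x4 : B₂, star ((hB i).sqrt x4 l) * (hB i).sqrt x4 l)
                * ((p i : ℝ) : ℂ)) := by
            refine Finset.sum_congr rfl fun k _ => Finset.sum_congr rfl fun l _ => ?_
            rw [Finset.sum_mul_sum]
            simp only [Finset.sum_mul]
            refine Finset.sum_congr rfl fun x3 _ => Finset.sum_congr rfl fun x4 _ => ?_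
            rw [← hps i]; ring
        _ = (∑ k : A₂, ∑ x3 : A₂, star ((hA i).sqrt x3 k) * (hA i).sqrt x3 k)
              * (∑ l : B₂, ∑ x4 : B₂, star ((hB i).sqrt x4 l) * (hB i).sqrt x4 l)
              * ((p i : ℝ) : ℂ) := by
            simp only [Finset.sum_mul, Finset.mul_sum]
            rw [Finset.sum_comm]
            refine Finset.sum_congr rfl fun l _ => ?_
            rw [Finset.sum_comm]
        _ = ((p i : ℝ) : ℂ) := by rw [hA1, hB1]; ring
    · rw [← Complex.ofReal_sum, hp1, Complex.ofReal_one]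

end Aux4
section Aux5
open Matrix

variable {A₁ B₁ A₂ B₂ : Type*} [Fintype A₁] [Fintype B₁] [Fintype A₂] [Fintype B₂]
  [DecidableEq A₁] [DecidableEq B₁] [DecidableEq A₂] [DecidableEq B₂]

/-- Kraus (A side) for discarding the ancilla. -/
noncomputable def disK (t : A₂ × B₂) : Matrix A₁ (A₁ × A₂) ℂ :=
  Matrix.of fun a u => if u = (a, t.1) then 1 else 0

/-- Kraus (B side) for discarding the ancilla. -/
noncomputable def disL (t : A₂ × B₂) : Matrix B₁ (B₁ × B₂) ℂ :=
  Matrix.of fun b v => if v = (b, t.2) then 1 else 0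

lemma dis_value (ρ : Matrix (A₁ × B₁) (A₁ × B₁) ℂ) (τ : Matrix (A₂ × B₂) (A₂ × B₂) ℂ) :
    sepChan (disK (B₂ := B₂)) (disL (A₂ := A₂)) (tensorState ρ τ) = τ.trace • ρ := by
  ext u v
  obtain ⟨ua, ub⟩ := u
  obtain ⟨va, vb⟩ := v
  simp only [sepChan, Matrix.sum_apply, Matrix.mul_apply, Matrix.conjTranspose_apply,
    Matrix.kroneckerMap_apply, disK, disL, Matrix.of_apply, tensorState_apply,
    ite_mul, mul_ite, zero_mul, mul_zero, apply_ite (star : ℂ → ℂ), star_zero, star_one,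
    one_mul, mul_one, Fintype.sum_prod_type, Finset.sum_ite_irrel, Finset.sum_const_zero,
    Finset.sum_ite_eq, Finset.sum_ite_eq', Finset.mem_univ, if_true,
    Matrix.smul_apply, Matrix.trace, Matrix.diag, smul_eq_mul, Finset.sum_mul,
    Finset.mul_sum]
  exact Finset.sum_congr rfl fun x _ => Finset.sum_congr rfl fun y _ => mul_comm _ _

lemma dis_tp : ∑ t : A₂ × B₂, ((disK (A₁ := A₁) (B₂ := B₂) t ⊗ₖ disL (B₁ := B₁) (A₂ := A₂) t)ᴴ
      * (disK (A₁ := A₁) (B₂ := B₂) t ⊗ₖ disL (B₁ := B₁) (A₂ := A₂) t)) = 1 := by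
  ext u v
  obtain ⟨⟨ua, ux⟩, ub, uy⟩ := u
  obtain ⟨⟨va, vx⟩, vb, vy⟩ := v
  simp only [Matrix.sum_apply, Matrix.mul_apply, Matrix.conjTranspose_apply,
    Matrix.kroneckerMap_apply, disK, disL, Matrix.of_apply, ite_mul, mul_ite, zero_mul,
    mul_zero, apply_ite (star : ℂ → ℂ), star_zero, star_one, one_mul, mul_one,
    Fintype.sum_prod_type, Prod.mk.injEq, ite_and, Finset.sum_ite_irrel,
    Finset.sum_const_zero, Finset.sum_ite_eq, Finset.sum_ite_eq', Finset.mem_univ,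
    if_true, Matrix.one_apply]
  by_cases h1 : ua = va <;> by_cases h2 : ux = vx <;> by_cases h3 : ub = vb <;>
    by_cases h4 : uy = vy <;> simp [h1, h2, h3, h4]

/-- Kraus (A side) for appending a `|0⟩` qubit. -/
noncomputable def qbK : Matrix (Fin 2 × A₂) A₂ ℂ :=
  Matrix.of fun u x => if u = (0, x) then 1 else 0

/-- Kraus (B side) for appending a `|0⟩` qubit. -/
noncomputable def qbL : Matrix (Fin 2 × B₂) B₂ ℂ :=
  Matrix.of fun u y => if u = (0, y) then 1 else 0

lemma qb_tp : ∑ _t : Unit, ((qbK (A₂ := A₂) ⊗ₖ qbL (B₂ := B₂))ᴴ * (qbK (A₂ := A₂) ⊗ₖ qbL (B₂ := B₂))) = 1 := by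
  ext u v
  obtain ⟨ux, uy⟩ := u
  obtain ⟨vx, vy⟩ := v
  simp only [Finset.sum_const, Finset.card_univ, Fintype.card_unit, one_smul,
    Matrix.mul_apply, Matrix.conjTranspose_apply, Matrix.kroneckerMap_apply, qbK, qbL,
    Matrix.of_apply, ite_mul, mul_ite, zero_mul, mul_zero,
    apply_ite (star : ℂ → ℂ), star_zero, star_one, one_mul, mul_one,
    Fintype.sum_prod_type, Prod.mk.injEq, ite_and, Finset.sum_ite_irrel,
    Finset.sum_const_zero, Finset.sum_ite_eq, Finset.sum_ite_eq', Finset.mem_univ,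
    if_true, Matrix.one_apply]
  by_cases h2 : ux = vx <;> by_cases h4 : uy = vy <;> simp [h2, h4, eq_comm]

lemma qb_dmap (ρ : Matrix (A₂ × B₂) (A₂ × B₂) ℂ) :
    dMap (sepChan (fun _ : Unit => qbK (A₂ := A₂)) (fun _ : Unit => qbL (B₂ := B₂)) ρ) = ρ := by
  ext u v
  obtain ⟨ux, uy⟩ := u
  obtain ⟨vx, vy⟩ := v
  simp only [dMap, sepChan, Matrix.of_apply, Matrix.sum_apply, Matrix.mul_apply,
    Matrix.conjTranspose_apply, Matrix.kroneckerMap_apply, qbK, qbL,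
    ite_mul, mul_ite, zero_mul, mul_zero, apply_ite (star : ℂ → ℂ), star_zero, star_one,
    one_mul, mul_one, Fintype.sum_prod_type, Prod.mk.injEq, ite_and,
    Finset.sum_ite_irrel, Finset.sum_const_zero, Finset.sum_ite_eq, Finset.sum_ite_eq',
    Finset.mem_univ, if_true, Finset.sum_const, Finset.card_univ, Fintype.card_unit,
    one_smul]

end Aux5
section Aux6
open Matrix

variable {A₂ B₂ : Type*} [Fintype A₂] [Fintype B₂] [DecidableEq A₂] [DecidableEq B₂]

noncomputable def pureMat {n : Type*} [DecidableEq n] (e : n) : Matrix n n ℂ :=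
  Matrix.of fun u v => if u = e ∧ v = e then (1 : ℂ) else 0

lemma pureMat_density {n : Type*} [Fintype n] [DecidableEq n] (e : n) :
    IsDensity (pureMat e) := pure_density e

lemma pureMat_kron {α β : Type*} [DecidableEq α] [DecidableEq β] (e1 : α) (e2 : β) :
    (pureMat e1) ⊗ₖ (pureMat e2) = pureMat (e1, e2) := by
  ext ⟨u1, u2⟩ ⟨v1, v2⟩
  by_cases h1 : u1 = e1 <;> by_cases h2 : u2 = e2 <;> by_cases h3 : v1 = e1 <;>
    by_cases h4 : v2 = e2 <;>
    simp [pureMat, Matrix.kroneckerMap_apply, Prod.ext_iff, h1, h2, h3, h4]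

lemma ptr_trace {q r : Type*} [Fintype q] [Fintype r] (M : Matrix (q × r) (q × r) ℂ) :
    (ptr M).trace = M.trace := by
  simp only [Matrix.trace, Matrix.diag, ptr, Matrix.of_apply, Fintype.sum_prod_type]
  exact Finset.sum_comm

lemma dMap_decomp {m : ℕ} (p : Fin m → ℝ)
    (σA : Fin m → Matrix (Fin 2 × A₂) (Fin 2 × A₂) ℂ)
    (σB : Fin m → Matrix (Fin 2 × B₂) (Fin 2 × B₂) ℂ) :
    dMap (∑ n, ((p n : ℝ) : ℂ) • (σA n ⊗ₖ σB n))
      = ∑ n, ((p n : ℝ) : ℂ) • (ptr (σA n) ⊗ₖ ptr (σB n)) := by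
  ext ⟨ux, uy⟩ ⟨vx, vy⟩
  simp only [dMap, Matrix.of_apply, Matrix.sum_apply, Matrix.smul_apply,
    Matrix.kroneckerMap_apply, ptr, smul_eq_mul]
  trans (∑ n, ∑ i : Fin 2, ∑ j : Fin 2,
      ((p n : ℝ) : ℂ) * (σA n (i, ux) (i, vx) * σB n (j, uy) (j, vy)))
  · exact (Finset.sum_congr rfl fun i _ => Finset.sum_comm).trans Finset.sum_comm
  · refine Finset.sum_congr rfl fun n _ => ?_
    rw [Finset.sum_mul_sum]
    simp only [Finset.mul_sum]

end Aux6
/-- If an entanglement monotone `E` (nonnegative, vanishing on separable states, and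
monotone under separable maps — in particular under LOCC) fails subadditivity on a pair
`ρ₁, ρ₂`, then there is a CPTP map (acting on two target qubits together with ancillas
carrying the space of `ρ₂`) whose unassisted entangling capacity equals `E ρ₁` but whose
entanglement-assisted capacity strictly exceeds `E ρ₁`: resource independence fails. -/
theorem subadditivity_necessary_for_resource_independence
    (E : ∀ (a b : Type) [Fintype a] [Fintype b] [DecidableEq a] [DecidableEq b],
      Matrix (a × b) (a × b) ℂ → ℝ)
    (hnonneg : ∀ (a b : Type) [Fintype a] [Fintype b] [DecidableEq a] [DecidableEq b]
      (ρ : Matrix (a × b) (a × b) ℂ), 0 ≤ E a b ρ)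
    (hsepzero : ∀ (a b : Type) [Fintype a] [Fintype b] [DecidableEq a] [DecidableEq b]
      (σ : Matrix (a × b) (a × b) ℂ), IsSeparableState σ → E a b σ = 0)
    (hmono : ∀ (a b a' b' : Type) [Fintype a] [Fintype b] [Fintype a'] [Fintype b']
      [DecidableEq a] [DecidableEq b] [DecidableEq a'] [DecidableEq b']
      (Λ : Matrix (a × b) (a × b) ℂ → Matrix (a' × b') (a' × b') ℂ), IsSepCPTP Λ →
      ∀ ρ, IsDensity ρ → E a' b' (Λ ρ) ≤ E a b ρ)
    {A₁ B₁ A₂ B₂ : Type} [Fintype A₁] [Fintype B₁] [Fintype A₂] [Fintype B₂]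
    [DecidableEq A₁] [DecidableEq B₁] [DecidableEq A₂] [DecidableEq B₂]
    (ρ₁ : Matrix (A₁ × B₁) (A₁ × B₁) ℂ) (ρ₂ : Matrix (A₂ × B₂) (A₂ × B₂) ℂ)
    (h₁ : IsDensity ρ₁) (h₂ : IsDensity ρ₂)
    (hviol : E A₁ B₁ ρ₁ + E A₂ B₂ ρ₂ < E (A₁ × A₂) (B₁ × B₂) (tensorState ρ₁ ρ₂)) :
    ∃ Λ : Matrix ((Fin 2 × A₂) × (Fin 2 × B₂)) ((Fin 2 × A₂) × (Fin 2 × B₂)) ℂ →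
        Matrix ((A₁ × A₂) × (B₁ × B₂)) ((A₁ × A₂) × (B₁ × B₂)) ℂ,
      IsCPTP Λ ∧
      (∀ σ, IsSeparableState σ → IsDensity σ →
        E (A₁ × A₂) (B₁ × B₂) (Λ σ) ≤ E A₁ B₁ ρ₁) ∧
      (∃ σ, IsSeparableState σ ∧ IsDensity σ ∧
        E (A₁ × A₂) (B₁ × B₂) (Λ σ) = E A₁ B₁ ρ₁) ∧
      (∃ ρ, IsDensity ρ ∧
        E A₁ B₁ ρ₁ < E (A₁ × A₂) (B₁ × B₂) (Λ ρ) - E (Fin 2 × A₂) (Fin 2 × B₂) ρ) := by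
  classical
  refine ⟨fun ρ => tensorState ρ₁ (dMap ρ), ?_, ?_⟩
  · -- CPTP
    refine ⟨Fintype.card ((A₁ × B₁) × Fin 2 × Fin 2),
      fun j => lamK h₁.1.sqrt ((Fintype.equivFin _).symm j), fun ρ => ?_, ?_⟩
    · show tensorState ρ₁ (dMap ρ) = _
      rw [lamK_value h₁.1 ρ]
      exact (Equiv.sum_comp (Fintype.equivFin _).symm
        (fun t => lamK h₁.1.sqrt t * ρ * (lamK h₁.1.sqrt t)ᴴ)).symm
    · rw [Equiv.sum_comp (Fintype.equivFin _).symm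
        (fun t => (lamK h₁.1.sqrt t)ᴴ * lamK h₁.1.sqrt t)]
      exact lamK_tp h₁.1 h₁.2
  have main : ∀ σ : Matrix ((Fin 2 × A₂) × (Fin 2 × B₂)) ((Fin 2 × A₂) × (Fin 2 × B₂)) ℂ,
      IsSeparableState σ → IsDensity σ →
      E (A₁ × A₂) (B₁ × B₂) (tensorState ρ₁ (dMap σ)) = E A₁ B₁ ρ₁ := by
    intro σ hsep hden
    obtain ⟨m, p, σA, σB, hp0, hp1, hdA, hdB, heq⟩ := hsep
    have hτ : dMap σ = ∑ n, ((p n : ℝ) : ℂ) • (ptr (σA n) ⊗ₖ ptr (σB n)) := by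
      rw [heq]; exact dMap_decomp p σA σB
    have hApsd : ∀ n, (ptr (σA n)).PosSemidef := fun n => (ptr_density (hdA n)).1
    have hBpsd : ∀ n, (ptr (σB n)).PosSemidef := fun n => (ptr_density (hdB n)).1
    have htrτ : (dMap σ).trace = 1 := by
      rw [hτ, Matrix.trace_sum]
      have : ∀ n, (((p n : ℝ) : ℂ) • (ptr (σA n) ⊗ₖ ptr (σB n))).trace = ((p n : ℝ) : ℂ) := by
        intro n
        rw [Matrix.trace_smul, Matrix.trace_kronecker, ptr_trace, ptr_trace,
          (hdA n).2, (hdB n).2]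
        simp
      rw [Finset.sum_congr rfl fun n _ => this n, ← Complex.ofReal_sum, hp1,
        Complex.ofReal_one]
    have hub : E (A₁ × A₂) (B₁ × B₂) (tensorState ρ₁ (dMap σ)) ≤ E A₁ B₁ ρ₁ := by
      have happ := hmono A₁ B₁ (A₁ × A₂) (B₁ × B₂)
        (sepChan (appK p (fun n => (hApsd n).sqrt)) (appL (fun n => (hBpsd n).sqrt)))
        (sepChan_isSepCPTP _ _
          (app_tp p hp0 hp1 _ _ hApsd hBpsd
            (fun n => by rw [ptr_trace]; exact (hdA n).2)
            (fun n => by rw [ptr_trace]; exact (hdB n).2)))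
        ρ₁ h₁
      rwa [app_value p hp0 _ _ hApsd hBpsd ρ₁, ← hτ] at happ
    have hdΛ : IsDensity (tensorState ρ₁ (dMap σ)) := by
      rw [lamK_value h₁.1 σ]
      exact kraus_density _ (lamK_tp h₁.1 h₁.2) hden
    have hlo : E A₁ B₁ ρ₁ ≤ E (A₁ × A₂) (B₁ × B₂) (tensorState ρ₁ (dMap σ)) := by
      have hdis := hmono (A₁ × A₂) (B₁ × B₂) A₁ B₁
        (sepChan (disK (B₂ := B₂)) (disL (A₂ := A₂)))
        (sepChan_isSepCPTP _ _ dis_tp) _ hdΛ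
      rwa [dis_value, htrτ, one_smul] at hdis
    exact le_antisymm hub hlo
  refine ⟨fun σ hs hd => (main σ hs hd).le, ?_, ?_⟩
  · -- some separable state achieving equality
    have hne : Nonempty (A₂ × B₂) := by
      by_contra hc
      rw [not_nonempty_iff] at hc
      have h0 : ρ₂.trace = 0 := by simp [Matrix.trace]
      rw [h₂.2] at h0
      exact one_ne_zero h0
    obtain ⟨a₀, b₀⟩ := hne
    refine ⟨pureMat ((0 : Fin 2), a₀) ⊗ₖ pureMat ((0 : Fin 2), b₀), ?_, ?_, ?_⟩
    · exact ⟨1, fun _ => 1, fun _ => pureMat (0, a₀), fun _ => pureMat (0, b₀),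
        fun _ => zero_le_one, by simp, fun _ => pureMat_density _,
        fun _ => pureMat_density _, by simp⟩
    · rw [pureMat_kron]; exact pureMat_density _
    · refine main _ ?_ ?_
      · exact ⟨1, fun _ => 1, fun _ => pureMat (0, a₀), fun _ => pureMat (0, b₀),
          fun _ => zero_le_one, by simp, fun _ => pureMat_density _,
          fun _ => pureMat_density _, by simp⟩
      · rw [pureMat_kron]; exact pureMat_density _
  · -- the assisted protocol: feed |0⟩|0⟩ ⊗ ρ₂
    refine ⟨sepChan (fun _ : Unit => qbK (A₂ := A₂)) (fun _ : Unit => qbL (B₂ := B₂)) ρ₂,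
      sepChan_density _ _ qb_tp h₂, ?_⟩
    have hρle : E (Fin 2 × A₂) (Fin 2 × B₂)
        (sepChan (fun _ : Unit => qbK (A₂ := A₂)) (fun _ : Unit => qbL (B₂ := B₂)) ρ₂)
        ≤ E A₂ B₂ ρ₂ :=
      hmono A₂ B₂ (Fin 2 × A₂) (Fin 2 × B₂) _ (sepChan_isSepCPTP _ _ qb_tp) ρ₂ h₂
    have hΛρ : tensorState ρ₁
        (dMap (sepChan (fun _ : Unit => qbK (A₂ := A₂)) (fun _ : Unit => qbL (B₂ := B₂)) ρ₂))
        = tensorState ρ₁ ρ₂ := by rw [qb_dmap]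
    show E A₁ B₁ ρ₁ < E (A₁ × A₂) (B₁ × B₂) (tensorState ρ₁ (dMap _)) - _
    rw [hΛρ]
    linarith
end

section
/- For the Kraus operator K = Σ_k λ_k A_k ⊗ B_k (operator Schmidt decomposition on ℂ^{d_a}⊗ℂ^{d_b}) applied to the product of maximally entangled states |Φ_A⟩|Φ_B⟩ (with each register doubled by an ancilla), the resulting state K|Φ_A⟩|Φ_B⟩ = Σ_k (λ_k/√(d_a d_b)) |ψ_{A_k}⟩|ψ_{B_k}⟩ is in Schmidt form across the A/B cut, so its log-negativity equals 2 log₂(Σ_k λ_k/√(d_a d_b)). -/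
open scoped Matrix Kronecker BigOperators ComplexOrder

/-- The trace norm `‖M‖₁ = tr √(Mᴴ M)`. -/
noncomputable def traceNorm {n : Type*} [Fintype n] [DecidableEq n] (M : Matrix n n ℂ) : ℝ :=
  (((Matrix.posSemidef_conjTranspose_mul_self M).1.eigenvectorUnitary : Matrix n n ℂ) *
    Matrix.diagonal ((fun x : ℝ => (x : ℂ)) ∘ (Real.sqrt ·) ∘ (Matrix.posSemidef_conjTranspose_mul_self M).1.eigenvalues) *
    (star (Matrix.posSemidef_conjTranspose_mul_self M).1.eigenvectorUnitary : Matrix n n ℂ)).trace.re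

/-- Partial transpose on the second (B) tensor factor. -/
def ptB {a b : Type*} (ρ : Matrix (a × b) (a × b) ℂ) : Matrix (a × b) (a × b) ℂ :=
  fun p q => ρ (p.1, q.2) (q.1, p.2)

/-- `|Φ_A⟩⊗|Φ_B⟩` on `(H_a ⊗ H_{a'}) ⊗ (H_b ⊗ H_{b'})`, written on the index set
`(a × a') × (b × b')`. -/
noncomputable def PhiProd (da db : ℕ) : ((Fin da × Fin da) × (Fin db × Fin db)) → ℂ :=
  fun x => (if x.1.1 = x.1.2 then (1 / (Real.sqrt da) : ℂ) else 0) *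
    (if x.2.1 = x.2.2 then (1 / (Real.sqrt db) : ℂ) else 0)

lemma vmv_mul {n : Type*} [Fintype n] (a b c d : n → ℂ) :
    Matrix.vecMulVec a b * Matrix.vecMulVec c d = (b ⬝ᵥ c) • Matrix.vecMulVec a d := by
  ext i j
  simp only [Matrix.mul_apply, Matrix.vecMulVec_apply, Matrix.smul_apply, dotProduct,
    smul_eq_mul, Finset.sum_mul]
  exact Finset.sum_congr rfl fun x _ => by ring

lemma psd_vmv {n : Type*} [Fintype n] (v : n → ℂ) : (Matrix.vecMulVec v (star v)).PosSemidef := by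
  have h : Matrix.vecMulVec v (star v)
      = (Matrix.of fun (_ : Unit) j => star (v j))ᴴ * (Matrix.of fun (_ : Unit) j => star (v j)) := by
    ext i j
    simp [Matrix.mul_apply, Matrix.vecMulVec_apply, Matrix.conjTranspose_apply]
  rw [h]
  exact Matrix.posSemidef_conjTranspose_mul_self _

lemma psd_smul {n : Type*} [Fintype n] {P : Matrix n n ℂ} (hP : P.PosSemidef) {r : ℝ}
    (hr : 0 ≤ r) : ((r : ℂ) • P).PosSemidef := by
  refine ⟨?_, fun x => ?_⟩
  · unfold Matrix.IsHermitian
    rw [Matrix.conjTranspose_smul, hP.1.eq]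
    congr 1
    simp
  · exact (hP.smul (by exact_mod_cast hr : (0:ℂ) ≤ r)).2 x

lemma mul_expand {n : Type*} [Fintype n] [DecidableEq n]
    {ι : Type*} [Fintype ι] [DecidableEq ι]
    (c : ι → ℝ) (u : ι → ι → n → ℂ)
    (hu : ∀ k j k' j', star (u k j) ⬝ᵥ u k' j' = if (k, j) = (k', j') then 1 else 0)
    (v v' : ι → ι → n → ℂ) :
    (∑ k, ∑ j, ((c k * c j : ℝ) : ℂ) • Matrix.vecMulVec (v k j) (star (u k j))) *
      (∑ k, ∑ j, ((c k * c j : ℝ) : ℂ) • Matrix.vecMulVec (u k j) (star (v' k j))) =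
    ∑ k, ∑ j, ((c k ^ 2 * c j ^ 2 : ℝ) : ℂ) • Matrix.vecMulVec (v k j) (star (v' k j)) := by
  simp only [Finset.sum_mul, Finset.mul_sum, smul_mul_assoc, Matrix.mul_smul, vmv_mul, hu,
    Prod.mk.injEq, ite_smul, one_smul, zero_smul, smul_zero, ite_and, smul_ite,
    Finset.sum_ite_eq, Finset.sum_ite_eq', Finset.mem_univ, if_true, smul_smul]
  refine Finset.sum_congr rfl fun k _ => Finset.sum_congr rfl fun j _ => ?_
  rw [Fintype.sum_eq_single k (fun x hx => Finset.sum_eq_zero fun y _ => if_neg hx)]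
  simp only [eq_self_iff_true, if_true]
  rw [Fintype.sum_eq_single j (fun y hy => if_neg hy), if_pos rfl]
  congr 1
  push_cast
  ring

open scoped MatrixOrder in
/-- Trace norm of the partially transposed Schmidt-form state. -/
lemma traceNorm_schmidt {n : Type*} [Fintype n] [DecidableEq n]
    {ι : Type*} [Fintype ι] [DecidableEq ι]
    (c : ι → ℝ) (hc : ∀ k, 0 ≤ c k) (u : ι → ι → n → ℂ)
    (hu : ∀ k j k' j', star (u k j) ⬝ᵥ u k' j' = if (k, j) = (k', j') then 1 else 0)
    (M : Matrix n n ℂ)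
    (hM : M = ∑ k, ∑ j, ((c k * c j : ℝ) : ℂ) • Matrix.vecMulVec (u k j) (star (u j k))) :
    traceNorm M = (∑ k, c k) ^ 2 := by
  set S : Matrix n n ℂ :=
    ∑ k, ∑ j, ((c k * c j : ℝ) : ℂ) • Matrix.vecMulVec (u k j) (star (u k j)) with hS
  have hSpsd : S.PosSemidef := by
    rw [hS]
    refine Finset.sum_induction _ _ (fun a b ha hb => ha.add hb) Matrix.PosSemidef.zero ?_
    intro k _
    refine Finset.sum_induction _ _ (fun a b ha hb => ha.add hb) Matrix.PosSemidef.zero ?_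
    intro j _
    exact psd_smul (psd_vmv _) (mul_nonneg (hc k) (hc j))
  have hMH : Mᴴ = ∑ k, ∑ j, ((c k * c j : ℝ) : ℂ) •
      Matrix.vecMulVec ((fun k j => u j k) k j) (star (u k j)) := by
    rw [hM]
    simp only [Matrix.conjTranspose_sum, Matrix.conjTranspose_smul]
    refine Finset.sum_congr rfl fun k _ => Finset.sum_congr rfl fun j _ => ?_
    congr 1
    · simp
    · ext i i'
      simp [Matrix.conjTranspose_apply, Matrix.vecMulVec_apply, mul_comm]
  have hM' : M = ∑ k, ∑ j, ((c k * c j : ℝ) : ℂ) •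
      Matrix.vecMulVec (u k j) (star ((fun k j => u j k) k j)) := hM
  have hsq : S ^ 2 = Mᴴ * M := by
    rw [pow_two, hS, hMH, hM', mul_expand c u hu u u,
      mul_expand c u hu (fun k j => u j k) (fun k j => u j k), Finset.sum_comm]
    refine Finset.sum_congr rfl fun k _ => Finset.sum_congr rfl fun j _ => ?_
    congr 1
    push_cast
    ring
  have hkey : S = (((Matrix.posSemidef_conjTranspose_mul_self M).1.eigenvectorUnitary : Matrix n n ℂ) *
      Matrix.diagonal ((fun x : ℝ => (x : ℂ)) ∘ (Real.sqrt ·) ∘ (Matrix.posSemidef_conjTranspose_mul_self M).1.eigenvalues) *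
      (star (Matrix.posSemidef_conjTranspose_mul_self M).1.eigenvectorUnitary : Matrix n n ℂ)) := by
    have hP := Matrix.posSemidef_conjTranspose_mul_self M
    have e1 : CFC.sqrt (Mᴴ * M) = S := CFC.sqrt_unique (by rw [← sq]; exact hsq) hSpsd.nonneg
    rw [← e1, CFC.sqrt_eq_cfc, cfc_nnreal_eq_real _ (Mᴴ * M) hP.nonneg, hP.1.cfc_eq,
      Matrix.IsHermitian.cfc, Unitary.conjStarAlgAut_apply]
    congr 3
    funext i
    simp [hP.eigenvalues_nonneg i]
  have h1 : ∀ k j : ι, (Matrix.vecMulVec (u k j) (star (u k j))).trace = 1 := by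
    intro k j
    have h2 := hu k j k j
    simp only [eq_self_iff_true, if_true] at h2
    rw [Matrix.trace]
    simp only [Matrix.diag_apply, Matrix.vecMulVec_apply]
    rw [← h2]
    simp only [dotProduct, Pi.star_apply]
    exact Finset.sum_congr rfl fun x _ => mul_comm _ _
  have htr : S.trace = (((∑ k, c k) ^ 2 : ℝ) : ℂ) := by
    rw [hS]
    simp only [Matrix.trace_sum, Matrix.trace_smul, h1, smul_eq_mul, mul_one]
    norm_cast
    rw [sq, Finset.sum_mul_sum]
  unfold traceNorm
  rw [← hkey, htr, Complex.ofReal_re]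

/-- Applying `K ⊗ 1_{a'b'}` to `|Φ_A⟩|Φ_B⟩` gives
`∑ₖ (λₖ/√(d_a d_b)) |ψ_{A_k}⟩|ψ_{B_k}⟩`, already in Schmidt form across the `(a,a')/(b,b')`
cut; hence its log-negativity is `2 log₂(∑ₖ λₖ/√(d_a d_b))`. -/
theorem choi_state_schmidt_form_and_log_negativity
    {da db : ℕ} (hda : 0 < da) (hdb : 0 < db)
    {ι : Type*} [Fintype ι] [DecidableEq ι]
    (lam : ι → ℝ) (hlam : ∀ k, 0 < lam k)
    (A : ι → Matrix (Fin da) (Fin da) ℂ) (B : ι → Matrix (Fin db) (Fin db) ℂ)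
    (hA : ∀ k j, ((A k)ᴴ * A j).trace = if k = j then 1 else 0)
    (hB : ∀ k j, ((B k)ᴴ * B j).trace = if k = j then 1 else 0)
    (K : Matrix (Fin da × Fin db) (Fin da × Fin db) ℂ)
    (hK : K = ∑ k, ((lam k : ℝ) : ℂ) • (A k ⊗ₖ B k))
    (w : ((Fin da × Fin da) × (Fin db × Fin db)) → ℂ)
    (hw : w = fun x => ∑ p : Fin da, ∑ q : Fin db,
      K (x.1.1, x.2.1) (p, q) * PhiProd da db ((p, x.1.2), (q, x.2.2))) :
    (w = fun x => ∑ k, ((lam k / Real.sqrt (da * db) : ℝ) : ℂ) *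
        (A k x.1.1 x.1.2) * (B k x.2.1 x.2.2)) ∧
    Real.logb 2 (traceNorm (ptB (Matrix.vecMulVec w (star w))))
      = 2 * Real.logb 2 (∑ k, lam k / Real.sqrt (da * db)) := by
  -- Part 1: Schmidt form of `w`.
  have hcast : ∀ k, ((lam k / Real.sqrt (da * db) : ℝ) : ℂ)
      = (lam k : ℂ) * (1 / (Real.sqrt da) : ℂ) * (1 / (Real.sqrt db) : ℂ) := by
    intro k
    rw [show ((da : ℝ) * db) = (da : ℝ) * (db : ℝ) by push_cast; ring,
      Real.sqrt_mul (Nat.cast_nonneg da)]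
    push_cast
    ring
  have part1 : (w = fun x => ∑ k, ((lam k / Real.sqrt (da * db) : ℝ) : ℂ) *
      (A k x.1.1 x.1.2) * (B k x.2.1 x.2.2)) := by
    funext x
    rw [hw]
    simp only [PhiProd, mul_ite, ite_mul, mul_zero, zero_mul, mul_one, Finset.sum_ite_eq',
      Finset.mem_univ, if_true]
    rw [hK]
    simp only [Matrix.sum_apply, Matrix.smul_apply, Matrix.kroneckerMap_apply, smul_eq_mul,
      Finset.sum_mul, hcast]
    refine Finset.sum_congr rfl fun k _ => ?_
    ring
  refine ⟨part1, ?_⟩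
  -- Part 2: log-negativity.
  set c : ι → ℝ := fun k => lam k / Real.sqrt (da * db) with hc
  set u : ι → ι → ((Fin da × Fin da) × (Fin db × Fin db)) → ℂ :=
    fun k j x => A k x.1.1 x.1.2 * star (B j x.2.1 x.2.2) with hudef
  have hcnn : ∀ k, 0 ≤ c k := fun k => div_nonneg (hlam k).le (Real.sqrt_nonneg _)
  -- orthonormality of the `u k j`
  have htA : ∀ k k', (∑ α : Fin da × Fin da, star (A k α.1 α.2) * A k' α.1 α.2)
      = if k = k' then 1 else 0 := by
    intro k k'
    rw [← hA k k', Matrix.trace, Fintype.sum_prod_type, Finset.sum_comm]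
    simp [Matrix.mul_apply, Matrix.conjTranspose_apply, Matrix.diag_apply]
  have htB' : ∀ j j', (∑ β : Fin db × Fin db, star (B j β.1 β.2) * B j' β.1 β.2)
      = if j = j' then 1 else 0 := by
    intro j j'
    rw [← hB j j', Matrix.trace, Fintype.sum_prod_type, Finset.sum_comm]
    simp [Matrix.mul_apply, Matrix.conjTranspose_apply, Matrix.diag_apply]
  have htB : ∀ j j', (∑ β : Fin db × Fin db, B j β.1 β.2 * star (B j' β.1 β.2))
      = if j = j' then 1 else 0 := by
    intro j j'
    rw [show (∑ β : Fin db × Fin db, B j β.1 β.2 * star (B j' β.1 β.2))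
        = ∑ β : Fin db × Fin db, star (B j' β.1 β.2) * B j β.1 β.2 from
      Finset.sum_congr rfl fun β _ => mul_comm _ _, htB' j' j]
    by_cases h : j = j' <;> simp [h, Ne.symm, eq_comm]
  have hu : ∀ k j k' j', star (u k j) ⬝ᵥ u k' j' = if (k, j) = (k', j') then 1 else 0 := by
    intro k j k' j'
    have hfac : star (u k j) ⬝ᵥ u k' j'
        = (∑ α : Fin da × Fin da, star (A k α.1 α.2) * A k' α.1 α.2) *
          (∑ β : Fin db × Fin db, B j β.1 β.2 * star (B j' β.1 β.2)) := by
      rw [Finset.sum_mul_sum, dotProduct, Fintype.sum_prod_type]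
      refine Finset.sum_congr rfl fun α _ => Finset.sum_congr rfl fun β _ => ?_
      simp only [hudef, Pi.star_apply, star_mul', star_star]
      ring
    rw [hfac, htA, htB]
    by_cases h1 : k = k' <;> by_cases h2 : j = j' <;> simp [h1, h2, Prod.ext_iff]
  -- the partial transpose in Schmidt-operator form
  have hrep : ptB (Matrix.vecMulVec w (star w)) = ∑ k, ∑ j, ((c k * c j : ℝ) : ℂ) •
      Matrix.vecMulVec (u k j) (star (u j k)) := by
    funext p q
    simp only [ptB, Matrix.vecMulVec_apply, Pi.star_apply, part1, Matrix.sum_apply,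
      Matrix.smul_apply, smul_eq_mul, star_sum, star_mul', star_star, Complex.star_def,
      Complex.conj_ofReal, Complex.conj_conj, Finset.sum_mul, Finset.mul_sum, hudef]
    rw [Finset.sum_comm]
    refine Finset.sum_congr rfl fun k _ => Finset.sum_congr rfl fun j _ => ?_
    simp only [hc, Complex.ofReal_mul, Complex.ofReal_div, Complex.ofReal_inv]
    ring
  have hTN : traceNorm (ptB (Matrix.vecMulVec w (star w))) = (∑ k, c k) ^ 2 :=
    traceNorm_schmidt c hcnn u hu _ hrep
  rw [hTN, Real.logb_pow]
  norm_num
end
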